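/- Let A be a Banach algebra and φ a non-zero multiplicative linear functional on A. If the bidual A** (equipped with the first Arens product) is left φ̃-biflat, then A is left φ-biflat. -/

import Mathlib

/-!
We realize the bidual `(B ⊗_p B)**` of the projective tensor product of a Banach algebra `B`
with itself canonically as the dual of the Banach space `B →L[ℂ] B* ` of bounded bilinear
forms on `B` (the latter being isometrically isomorphic to `(B ⊗_p B)*`).  All the canonical
Banach `B`-bimodule actions are spelled out explicitly through this identification.
The multiplication of the Banach algebra `B` is encoded as a bounded bilinear map
`μ : B →L[ℂ] B →L[ℂ] B` (for a Banach algebra `A`, `μ = ContinuousLinearMap.mul ℂ A`).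
-/

noncomputable section

namespace NormedSpace

/-- The topological dual of a seminormed space `E` (reinstated: `NormedSpace.Dual` is gone from
current Mathlib; this is its former definition, with its former helper instances). -/
abbrev Dual (𝕜 : Type*) [NontriviallyNormedField 𝕜] (E : Type*) [SeminormedAddCommGroup E]
    [NormedSpace 𝕜 E] : Type _ :=
  E →L[𝕜] 𝕜

instance (𝕜 : Type*) [NontriviallyNormedField 𝕜] (E : Type*) [SeminormedAddCommGroup E]
    [NormedSpace 𝕜 E] : NormedSpace 𝕜 (Dual 𝕜 E) :=
  inferInstance

instance (𝕜 : Type*) [NontriviallyNormedField 𝕜] (E : Type*) [SeminormedAddCommGroup E]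
    [NormedSpace 𝕜 E] : SeminormedAddCommGroup (Dual 𝕜 E) :=
  inferInstance

end NormedSpace

open ContinuousLinearMap NormedSpace

/-- The space of bounded bilinear forms on `B`, canonically the dual of the projective
tensor product `B ⊗_p B`. -/
abbrev BilForm (B : Type*) [NormedAddCommGroup B] [NormedSpace ℂ B] : Type _ :=
  B →L[ℂ] Dual ℂ B

/-- The bidual of the projective tensor product `B ⊗_p B`, realized canonically as the dual of
the Banach space of bounded bilinear forms on `B`. -/
abbrev TensorBidual (B : Type*) [NormedAddCommGroup B] [NormedSpace ℂ B] : Type _ :=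
  Dual ℂ (BilForm B)

/-- The bidual `B**` of a normed space `B`. -/
abbrev Bidual (B : Type*) [NormedAddCommGroup B] [NormedSpace ℂ B] : Type _ :=
  Dual ℂ (Dual ℂ B)

variable {B : Type*} [NormedAddCommGroup B] [NormedSpace ℂ B]

/-- The left action of `a ∈ B` (with multiplication `μ`) on `(B ⊗_p B)**`:
`(a • T) β = T ((x, y) ↦ β (a x, y))`, the canonical bidual extension of the
`B`-bimodule action `a • (x ⊗ y) = (a x) ⊗ y` on `B ⊗_p B`. -/
def tensorLSmul (μ : B →L[ℂ] B →L[ℂ] B) (a : B) (T : TensorBidual B) : TensorBidual B :=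
  T.comp ((compL ℂ B B (Dual ℂ B)).flip (μ a))

/-- The right action of `a ∈ B` on `(B ⊗_p B)**`:
`(T • a) β = T ((x, y) ↦ β (x, y a))`, the canonical bidual extension of the
`B`-bimodule action `(x ⊗ y) • a = x ⊗ (y a)` on `B ⊗_p B`. -/
def tensorRSmul (μ : B →L[ℂ] B →L[ℂ] B) (T : TensorBidual B) (a : B) : TensorBidual B :=
  T.comp (compL ℂ B (Dual ℂ B) (Dual ℂ B) ((compL ℂ B B ℂ).flip (μ.flip a)))

/-- `π_B^* ψ`, the image of a functional `ψ ∈ B*` under the adjoint of the product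
morphism `π_B : B ⊗_p B → B`; as a bilinear form it is `(x, y) ↦ ψ (x y)`.  Thus
`π_B** T ψ = T (piDual μ ψ)` for `T ∈ (B ⊗_p B)**`. -/
def piDual (μ : B →L[ℂ] B →L[ℂ] B) (ψ : Dual ℂ B) : BilForm B :=
  (compL ℂ B B ℂ ψ).comp μ

/-- The left action of `a ∈ B` on the bidual `B**`: `(a • m) f = m (f ∘ (a * ·))`. -/
def bidualLSmul (μ : B →L[ℂ] B →L[ℂ] B) (a : B) (m : Bidual B) : Bidual B :=
  m.comp ((compL ℂ B B ℂ).flip (μ a))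

/-- A Banach algebra `B` (with multiplication `μ` and a multiplicative functional `ψ`) is
*left `ψ`-biflat* if there is a bounded linear map `ρ : B → (B ⊗_p B)**` with
`ρ (a b) = ψ (b) ρ (a) = a • ρ (b)` for all `a, b ∈ B`, and `ψ̃ ∘ π_B** ∘ ρ = ψ`
(note `(ψ̃ ∘ π_B**) T = T (piDual μ ψ)`). -/
def IsLeftBiflat (μ : B →L[ℂ] B →L[ℂ] B) (ψ : Dual ℂ B) : Prop :=
  ∃ ρ : B →L[ℂ] TensorBidual B,
    (∀ a b : B, ρ (μ a b) = ψ b • ρ a ∧ ρ (μ a b) = tensorLSmul μ a (ρ b)) ∧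
    ∀ a : B, ρ a (piDual μ ψ) = ψ a

/-- A Banach algebra `B` is *left `ψ`-amenable* if there is `m ∈ B**` with
`a • m = ψ (a) m` for all `a ∈ B` and `ψ̃ (m) = m (ψ) = 1`. -/
def IsLeftAmenable (μ : B →L[ℂ] B →L[ℂ] B) (ψ : Dual ℂ B) : Prop :=
  ∃ m : Bidual B, (∀ (a : B) (f : Dual ℂ B), m (f.comp (μ a)) = ψ a * m f) ∧ m ψ = 1

/-- Auxiliary map for the first Arens product: `arensAux μ f a = f · a`, where
`(f · a) (b) = f (a b)`. -/
def arensAux (μ : B →L[ℂ] B →L[ℂ] B) : Dual ℂ B →L[ℂ] (B →L[ℂ] Dual ℂ B) :=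
  ((compL ℂ B (B →L[ℂ] B) (Dual ℂ B)).flip μ).comp (compL ℂ B B ℂ)

/-- Second auxiliary map for the first Arens product: `arensAux₂ μ n f = n · f`, where
`(n · f) (a) = n (f · a)`. -/
def arensAux₂ (μ : B →L[ℂ] B →L[ℂ] B) : Bidual B →L[ℂ] (Dual ℂ B →L[ℂ] Dual ℂ B) :=
  ((compL ℂ (Dual ℂ B) (B →L[ℂ] Dual ℂ B) (Dual ℂ B)).flip (arensAux μ)).comp
    (compL ℂ B (Dual ℂ B) ℂ)

/-- The *first Arens product* on the bidual `B**` of a Banach algebra `B` with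
multiplication `μ`: `(m □ n) (f) = m (n · f)`, where `(n · f) (a) = n (f · a)` and
`(f · a) (b) = f (a b)`. -/
def arens (μ : B →L[ℂ] B →L[ℂ] B) : Bidual B →L[ℂ] Bidual B →L[ℂ] Bidual B :=
  ((compL ℂ (Bidual B) (Dual ℂ B →L[ℂ] Dual ℂ B) (Bidual B)).flip (arensAux₂ μ)).comp
    (compL ℂ (Dual ℂ B) (Dual ℂ B) ℂ)

/-- `ψ̃`, the canonical extension of a functional `ψ ∈ B*` to a functional on `B**`
(given by `ψ̃ (m) = m (ψ)`); if `ψ` is a character of `B`, this is the unique extension of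
`ψ` to a character of `B**` with the first Arens product. -/
def charExt (ψ : Dual ℂ B) : Dual ℂ (Bidual B) :=
  ContinuousLinearMap.apply ℂ ℂ ψ

/-!
Every bounded bilinear form on `B` extends canonically to one on `B**`, so the adjoint of this
extension maps `(B** ⊗_p B**)**` to `(B ⊗_p B)**`. Composing a biflatness map `ρ` of `B**` with
the embedding `ι : B → B**` and this restriction gives one for `B`: `ι` is multiplicative for the
first Arens product, the extension intertwines the left actions of `a` and of `ι a`, and it sends
`π_B^* ψ` to `π_{B**}^* ψ̃`.
-/

/-- `β ↦ ((m, n) ↦ m (x ↦ n (β x)))`. -/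
def bilFormExtend : BilForm B →L[ℂ] BilForm (Bidual B) :=
  (compL ℂ (Bidual B) (Dual ℂ B) ℂ).flip.comp (compL ℂ B (Dual ℂ B) ℂ).flip

def tensorBidualRestrict : TensorBidual (Bidual B) →L[ℂ] TensorBidual B :=
  (compL ℂ (BilForm B) (BilForm (Bidual B)) ℂ).flip bilFormExtend

@[simp]
theorem tensorBidualRestrict_apply (T : TensorBidual (Bidual B)) (β : BilForm B) :
    tensorBidualRestrict T β = T (bilFormExtend β) :=
  rfl

variable (μ : B →L[ℂ] B →L[ℂ] B)

theorem inclusionInDoubleDual_map_mul (a b : B) :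
    inclusionInDoubleDual ℂ B (μ a b) =
      arens μ (inclusionInDoubleDual ℂ B a) (inclusionInDoubleDual ℂ B b) :=
  rfl

theorem charExt_inclusionInDoubleDual (ψ : Dual ℂ B) (a : B) :
    charExt ψ (inclusionInDoubleDual ℂ B a) = ψ a :=
  rfl

theorem bilFormExtend_comp_mul (a : B) (β : BilForm B) :
    bilFormExtend (β.comp (μ a)) =
      (bilFormExtend β).comp (arens μ (inclusionInDoubleDual ℂ B a)) :=
  rfl

theorem bilFormExtend_piDual (ψ : Dual ℂ B) :
    bilFormExtend (piDual μ ψ) = piDual (arens μ) (charExt ψ) :=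
  rfl

theorem tensorBidualRestrict_tensorLSmul (a : B) (T : TensorBidual (Bidual B)) :
    tensorBidualRestrict (tensorLSmul (arens μ) (inclusionInDoubleDual ℂ B a) T) =
      tensorLSmul μ a (tensorBidualRestrict T) := by
  ext β
  exact congrArg T (bilFormExtend_comp_mul μ a β).symm

theorem IsLeftBiflat.of_bidual {ψ : Dual ℂ B}
    (h : IsLeftBiflat (B := Bidual B) (arens μ) (charExt ψ)) :
    IsLeftBiflat μ ψ := by
  obtain ⟨ρ, hρ_mul, hρ_pi⟩ := h
  refine ⟨tensorBidualRestrict.comp (ρ.comp (inclusionInDoubleDual ℂ B)),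
    fun a b => ?_, fun a => ?_⟩
  · obtain ⟨h_right, h_left⟩ :=
      hρ_mul (inclusionInDoubleDual ℂ B a) (inclusionInDoubleDual ℂ B b)
    simp only [coe_comp, Function.comp_apply, inclusionInDoubleDual_map_mul]
    constructor
    · rw [h_right, charExt_inclusionInDoubleDual, map_smul]
    · rw [h_left, tensorBidualRestrict_tensorLSmul]
  · simp only [coe_comp, Function.comp_apply, tensorBidualRestrict_apply, bilFormExtend_piDual]
    exact hρ_pi (inclusionInDoubleDual ℂ B a)

variable {A : Type*} [NonUnitalNormedRing A] [NormedSpace ℂ A]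
  [IsScalarTower ℂ A A] [SMulCommClass ℂ A A] [CompleteSpace A]

theorem left_phi_biflat_of_bidual_left_phi_biflat_general
    (φ : A →L[ℂ] ℂ)
    (hbf : IsLeftBiflat (B := Bidual A) (arens (ContinuousLinearMap.mul ℂ A)) (charExt φ)) :
    IsLeftBiflat (ContinuousLinearMap.mul ℂ A) φ :=
  IsLeftBiflat.of_bidual _ hbf

/-- half of Theorem 2.2: if the bidual `A**` of a Banach algebra `A`,
equipped with the first Arens product, is left `φ̃`-biflat, then `A` is left `φ`-biflat. -/
theorem left_phi_biflat_of_bidual_left_phi_biflat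
    (φ : A →L[ℂ] ℂ) (hφ_ne : φ ≠ 0)
    (hφ_mul : ∀ a b : A, φ (a * b) = φ a * φ b)
    (hbf : IsLeftBiflat (B := Bidual A) (arens (ContinuousLinearMap.mul ℂ A)) (charExt φ)) :
    IsLeftBiflat (ContinuousLinearMap.mul ℂ A) φ :=
  left_phi_biflat_of_bidual_left_phi_biflat_general φ hbf
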